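/- Let T^d=(N,E,d) be a tree diagram with n nodes and let I be an abelian ideal of L_1(T^d). Let 2≤i≤n be a node with clan C_i={ι_{i_1},…,ι_{i_r}} such that d[(ι_{i_{r−1}},ι_i)] > 1. Then ∂_{x_1} ∉ I, and for every 2 ≤ s < r and all exponents j_1,…,j_{s−1}∈ℕ, the operator x_{i_1}^{j_1}⋯x_{i_{s−1}}^{j_{s−1}} ∂_{x_{i_s}} does not belong to I. -/

import Mathlib

noncomputable section

attribute [local instance 100] LieRing.ofAssociativeRing

/-- The algebra of linear operators on polynomials in `n` variables (contains the
differential operators with polynomial coefficients). -/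
abbrev DiffOp (n : ℕ) : Type := Module.End ℂ (MvPolynomial (Fin n) ℂ)

/-- The partial derivative operator `∂_{x_i}`. -/
noncomputable def pd {n : ℕ} (i : Fin n) : DiffOp n := (MvPolynomial.pderiv i).toLinearMap

/-- The operator of multiplication by `x_i`. -/
noncomputable def mX {n : ℕ} (i : Fin n) : DiffOp n := LinearMap.mulLeft ℂ (MvPolynomial.X i)

/-- The operator of multiplication by the monomial `∏ x_a ^ (j a)`. -/
noncomputable def mXpow {n : ℕ} (j : Fin n → ℕ) : DiffOp n :=
  LinearMap.mulLeft ℂ (∏ a : Fin n, (MvPolynomial.X a) ^ (j a))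

/-- A tree diagram on `n` nodes (nodes `0,…,n-1`, node `0` being the root): every node
`i ≠ 0` has a unique parent `parent i < i`, and the edge `(parent i, i)` carries a
positive integral weight `weight i`. -/
structure TreeDiagram (n : ℕ) [NeZero n] where
  parent : Fin n → Fin n
  parent_lt : ∀ i : Fin n, i ≠ 0 → parent i < i
  weight : Fin n → ℕ
  weight_pos : ∀ i : Fin n, i ≠ 0 → 0 < weight i

variable {n : ℕ} [NeZero n]

/-- The clan of a node: the set of nodes on the unique path from the root to `i`
(including both ends). -/
def clanSet (T : TreeDiagram n) : Fin n → Finset (Fin n)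
  | i => if h : i = 0 then {i} else insert i (clanSet T (T.parent i))
termination_by i => i.val
decreasing_by exact T.parent_lt i h

/-- The product of the weights of all edges along the path from the root to `i`. -/
def chainWt (T : TreeDiagram n) : Fin n → ℕ
  | i => if h : i = 0 then 1 else chainWt T (T.parent i) * T.weight i
termination_by i => i.val
decreasing_by exact T.parent_lt i h

/-- `j` is a descendant of `i`. -/
def Desc (T : TreeDiagram n) (i j : Fin n) : Prop := i ≠ j ∧ i ∈ clanSet T j

/-- A node is a tip if it has no children. -/
def IsTip (T : TreeDiagram n) (i : Fin n) : Prop := ∀ j : Fin n, j ≠ 0 → T.parent j ≠ i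

/-- Generators `∂_{x_1}` and `x_i^{d[(ι_i,ι_j)]} ∂_{x_j}` for edges `(ι_i,ι_j)`. -/
def upGens (T : TreeDiagram n) : Set (DiffOp n) :=
  {pd (0 : Fin n)} ∪ {A | ∃ j : Fin n, j ≠ 0 ∧ A = (mX (T.parent j)) ^ (T.weight j) * pd j}

/-- Generators `∂_{x_r}` for tips `ι_r` and `x_j^{d[(ι_i,ι_j)]} ∂_{x_i}` for edges. -/
def downGens (T : TreeDiagram n) : Set (DiffOp n) :=
  {A | ∃ r : Fin n, IsTip T r ∧ A = pd r} ∪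
    {A | ∃ j : Fin n, j ≠ 0 ∧ A = (mX j) ^ (T.weight j) * pd (T.parent j)}

/-- The upward nilpotent Lie algebra `L_0(T^d)`. -/
def upL0 (T : TreeDiagram n) : LieSubalgebra ℂ (DiffOp n) :=
  LieSubalgebra.lieSpan ℂ _ (upGens T)

/-- The downward nilpotent Lie algebra `ℒ_0(T^d)`. -/
def downL0 (T : TreeDiagram n) : LieSubalgebra ℂ (DiffOp n) :=
  LieSubalgebra.lieSpan ℂ _ (downGens T)

/-- The toral Cartan subalgebra `H = Σ ℂ x_i ∂_{x_i}`. -/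
def Hcart (n : ℕ) : Submodule ℂ (DiffOp n) :=
  Submodule.span ℂ (Set.range fun i : Fin n => mX i * pd i)

/-- `L_1(T^d) = H + L_0(T^d)`. -/
def upL1 (T : TreeDiagram n) : Submodule ℂ (DiffOp n) := Hcart n ⊔ (upL0 T).toSubmodule

/-- `ℒ_1(T^d) = H + ℒ_0(T^d)`. -/
def downL1 (T : TreeDiagram n) : Submodule ℂ (DiffOp n) := Hcart n ⊔ (downL0 T).toSubmodule

/-- `I` is an abelian (Lie) ideal of `L`. -/
def IsAbelianIdeal (L I : Submodule ℂ (DiffOp n)) : Prop :=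
  I ≤ L ∧ (∀ x ∈ L, ∀ y ∈ I, ⁅x, y⁆ ∈ I) ∧ ∀ x ∈ I, ∀ y ∈ I, ⁅x, y⁆ = (0 : DiffOp n)

/-- The lower central series: `lcs L k = G^{k+1}` in the paper's notation
(`G^1 = G`, `G^{i+1} = [G, G^i]`). -/
def lcs (L : LieSubalgebra ℂ (DiffOp n)) : ℕ → Submodule ℂ (DiffOp n)
  | 0 => L.toSubmodule
  | (k+1) => Submodule.span ℂ {z : DiffOp n | ∃ x ∈ L, ∃ y ∈ lcs L k, z = ⁅x, y⁆}

/-- Membership in `R_i`: exponent tuples supported on the strict ancestors of `i`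
(the clan of `i` with `i` removed) with `Σ_a j_a · d_1⋯d_{s(a)-1} ≤ d_1⋯d_{r-1}`. -/
def memR (T : TreeDiagram n) (i : Fin n) (j : Fin n → ℕ) : Prop :=
  (∀ a : Fin n, a ∉ (clanSet T i).erase i → j a = 0) ∧
    ∑ a ∈ (clanSet T i).erase i, j a * chainWt T a ≤ chainWt T i

/-- `ℓ_i`: the number of exponent tuples in `R_i`. -/
def ellCard (T : TreeDiagram n) (i : Fin n) : ℕ := Nat.card {j : Fin n → ℕ // memR T i j}

/-- A node is multiplicity-free if the edge to its parent has weight 1. -/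
def MultFree (T : TreeDiagram n) (i : Fin n) : Prop := i ≠ 0 ∧ T.weight i = 1

/-- `Υ`: the set of nodes all of whose descendants are multiplicity-free. -/
def Upsilon (T : TreeDiagram n) : Set (Fin n) := {i | ∀ j : Fin n, Desc T i j → MultFree T j}

/-- A set of nodes is independent if no element is a descendant of another. -/
def IndepSet (T : TreeDiagram n) (S : Set (Fin n)) : Prop :=
  ∀ a ∈ S, ∀ b ∈ S, ¬ Desc T a b

/-- The ideal `I(S) = Span{x^{j⃗}∂_{x_i}, x^{j⃗}∂_{x_s} : ι_i ∈ S, j⃗ ∈ R_i, ι_s ∈ D_i}`. -/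
def upIdealS (T : TreeDiagram n) (S : Set (Fin n)) : Submodule ℂ (DiffOp n) :=
  Submodule.span ℂ
    {A : DiffOp n | ∃ i ∈ S, ∃ j : Fin n → ℕ, memR T i j ∧
      ∃ s : Fin n, (s = i ∨ Desc T i s) ∧ A = mXpow j * pd s}

/-- The partial order `⪯` on `R_i`. -/
def Rle (T : TreeDiagram n) (i : Fin n) (j l : Fin n → ℕ) : Prop :=
  ∀ b ∈ (clanSet T i).erase i,
    ∑ a ∈ ((clanSet T i).erase i).filter (fun a => b ∈ clanSet T a),
        j a * (chainWt T a / chainWt T b) ≤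
      ∑ a ∈ ((clanSet T i).erase i).filter (fun a => b ∈ clanSet T a),
        l a * (chainWt T a / chainWt T b)

/-- `W = S ∪ ⋃_{ι_i ∈ S} D_i`. -/
def Wset (T : TreeDiagram n) (S : Set (Fin n)) : Set (Fin n) :=
  {r | ∃ i ∈ S, r = i ∨ Desc T i r}

/-- An admissible pair for abelian ideals of `L_1(T^d)`. -/
structure UpAdmiss (n : ℕ) [NeZero n] (T : TreeDiagram n) where
  S : Set (Fin n)
  K : Fin n → Set (Fin n → ℕ)
  S_ne : S.Nonempty
  S_sub : S ⊆ Upsilon T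
  S_indep : IndepSet T S
  K_out : ∀ r : Fin n, r ∉ Wset T S → K r = ∅
  K_mem : ∀ i ∈ S, ∀ r : Fin n, (r = i ∨ Desc T i r) → ∀ j ∈ K r, memR T i j
  K_indep : ∀ i ∈ S, ∀ r : Fin n, (r = i ∨ Desc T i r) →
    ∀ j ∈ K r, ∀ l ∈ K r, Rle T i j l → Rle T i l j
  K_ne : ∀ i ∈ S, (K i).Nonempty
  K_chain : ∀ i ∈ S, ∀ r : Fin n, (r = i ∨ Desc T i r) → ∀ s : Fin n, Desc T r s →
    ∀ j ∈ K r, ∀ l ∈ K s, ¬ (Rle T i l j ∧ ¬ Rle T i j l)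

/-- The abelian ideal `I[S,{K_r}] = Σ_{ι_s∈W} Σ_{j⃗∈K_s} I[s,j⃗]`. -/
def upAdIdeal (T : TreeDiagram n) (P : UpAdmiss n T) : Submodule ℂ (DiffOp n) :=
  Submodule.span ℂ
    {A : DiffOp n | ∃ i ∈ P.S, ∃ s : Fin n, (s = i ∨ Desc T i s) ∧ ∃ j ∈ P.K s,
      ∃ l : Fin n → ℕ, memR T i l ∧ Rle T i l j ∧
        ∃ r : Fin n, (r = s ∨ Desc T s r) ∧ A = mXpow l * pd r}

instance (T : TreeDiagram n) (i : Fin n) : Decidable (IsTip T i) :=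
  decidable_of_iff (∀ j : Fin n, j ≠ 0 → T.parent j ≠ i) Iff.rfl

instance (T : TreeDiagram n) (i j : Fin n) : Decidable (Desc T i j) :=
  decidable_of_iff (i ≠ j ∧ i ∈ clanSet T j) Iff.rfl

/-- `D_i` as a finset. -/
def Dfin (T : TreeDiagram n) (i : Fin n) : Finset (Fin n) :=
  Finset.univ.filter fun j => Desc T i j

/-- `κ_i`: the product of the weights of all edges inside `F_i = {ι_i} ∪ D_i`. -/
def kappa (T : TreeDiagram n) (i : Fin n) : ℕ := ∏ j ∈ Dfin T i, T.weight j

/-- The product of the weights of the edges on the path from `i` to a descendant `j`: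
`∏_{e ∈ E_{i,j}} d(e)`. -/
def pathWt (T : TreeDiagram n) (i j : Fin n) : ℕ :=
  ∏ a ∈ (clanSet T j) \ (clanSet T i), T.weight a

/-- `κ_{i,j} = κ_i / ∏_{e ∈ E_{i,j}} d(e)`. -/
def kappaIS (T : TreeDiagram n) (i j : Fin n) : ℕ := kappa T i / pathWt T i j

/-- Membership in `ℜ_i`: tuples supported on `D_i` with `Σ_s j_s κ_{i,s} ≤ κ_i`. -/
def memcR (T : TreeDiagram n) (i : Fin n) (j : Fin n → ℕ) : Prop :=
  (∀ a : Fin n, ¬ Desc T i a → j a = 0) ∧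
    ∑ a ∈ Dfin T i, j a * kappaIS T i a ≤ kappa T i

/-- The partial order `⪯` on `ℜ_i`. -/
def cRle (T : TreeDiagram n) (i : Fin n) (j l : Fin n → ℕ) : Prop :=
  ∀ m : Fin n, Desc T i m →
    ∑ r ∈ (clanSet T (T.parent m)) \ (clanSet T i), j r * pathWt T r (T.parent m) ≤
      ∑ r ∈ (clanSet T (T.parent m)) \ (clanSet T i), l r * pathWt T r (T.parent m)

/-- `Φ = {ι_1} ∪ {ι_i : all edges inside the clan of `ι_i` have weight 1}`. -/
def PhiSet (T : TreeDiagram n) : Set (Fin n) :=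
  {i | ∀ a ∈ clanSet T i, a ≠ 0 → T.weight a = 1}

/-- `Ω`: the set of children of the root. -/
def OmegaSet (T : TreeDiagram n) : Set (Fin n) := {i | i ≠ 0 ∧ T.parent i = 0}

/-- The ideal `𝓘(S) = Span{x^{j⃗}∂_{x_s} : ι_i ∈ S, j⃗ ∈ ℜ_i, ι_s ∈ C_i}`. -/
def downIdealS (T : TreeDiagram n) (S : Set (Fin n)) : Submodule ℂ (DiffOp n) :=
  Submodule.span ℂ
    {A : DiffOp n | ∃ i ∈ S, ∃ j : Fin n → ℕ, memcR T i j ∧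
      ∃ s ∈ clanSet T i, A = mXpow j * pd s}

/-- An admissible pair for abelian ideals of `ℒ_1(T^d)`. -/
structure DownAdmiss (n : ℕ) [NeZero n] (T : TreeDiagram n) where
  S : Set (Fin n)
  K : Fin n → Fin n → Set (Fin n → ℕ)
  S_ne : S.Nonempty
  S_sub : S ⊆ PhiSet T
  S_indep : IndepSet T S
  K_out : ∀ i r : Fin n, (i ∉ S ∨ r ∉ clanSet T i) → K i r = ∅
  K_mem : ∀ i ∈ S, ∀ r ∈ clanSet T i, ∀ j ∈ K i r, memcR T i j
  K_indep : ∀ i ∈ S, ∀ r ∈ clanSet T i, ∀ j ∈ K i r, ∀ l ∈ K i r,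
    cRle T i j l → cRle T i l j
  K_ne : ∀ i ∈ S, (K i i).Nonempty
  K_cond : ∀ i ∈ S, ∀ s ∈ clanSet T i, ∀ r ∈ clanSet T s, r ≠ s →
    ∀ j ∈ K i r, ∀ l ∈ K i s, ¬ (cRle T i j l ∧ ¬ cRle T i l j)

/-- The abelian ideal `𝓘[S,{𝒦_r}] = Σ_{ι_s∈W} Σ_{j⃗∈𝒦_s} 𝓘[s,j⃗]`. -/
def downAdIdeal (T : TreeDiagram n) (P : DownAdmiss n T) : Submodule ℂ (DiffOp n) :=
  Submodule.span ℂ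
    {A : DiffOp n | ∃ i ∈ P.S, ∃ s ∈ clanSet T i, ∃ j ∈ P.K i s,
      ∃ l : Fin n → ℕ, memcR T s l ∧ cRle T s l j ∧
        ∃ r ∈ clanSet T s, A = mXpow l * pd r}

end

noncomputable section

/-- `A` acts locally nilpotently at `p`. -/
def LocNilpOn {M : Type} [AddCommGroup M] [Module ℂ M] (A : Module.End ℂ M) (p : M) : Prop :=
  ∃ N : ℕ, ∀ k : ℕ, N ≤ k → (A ^ k) p = 0

open scoped Classical in
/-- `e^A(p) = Σ_k A^k(p)/k!`, a finite sum when `A` acts locally nilpotently at `p`. -/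
noncomputable def expApply {M : Type} [AddCommGroup M] [Module ℂ M]
    (A : Module.End ℂ M) (p : M) : M :=
  if h : LocNilpOn A p then
    ∑ k ∈ Finset.range h.choose, ((k.factorial : ℂ))⁻¹ • (A ^ k) p
  else 0

open scoped Classical in
/-- `θ(A)(q) = Σ_{i≥1} ((−1)^{i−1}/i!) A^{i−1}(q)` where `θ(x) = (1−e^{−x})/x`. -/
noncomputable def thetaApply {M : Type} [AddCommGroup M] [Module ℂ M]
    (A : Module.End ℂ M) (q : M) : M :=
  if h : LocNilpOn A q then
    ∑ k ∈ Finset.range h.choose, ((-1 : ℂ) ^ k * (((k + 1).factorial : ℂ))⁻¹) • (A ^ k) q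
  else 0

abbrev DiffOp' (n : ℕ) : Type := Module.End ℂ (MvPolynomial (Fin n) ℂ)

noncomputable def pd' {n : ℕ} (i : Fin n) : DiffOp' n := (MvPolynomial.pderiv i).toLinearMap
noncomputable def mX' {n : ℕ} (i : Fin n) : DiffOp' n := LinearMap.mulLeft ℂ (MvPolynomial.X i)

/-- `D_i = t(∂_{x_1} + Σ_{r=1}^{i-1} x_r^{m_r} ∂_{x_{r+1}})` (0-based indices). -/
noncomputable def DchainOp (n : ℕ) (hn : 0 < n) (m : ℕ → ℕ) (t : ℂ) (i : ℕ) : DiffOp' n :=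
  t • (pd' (⟨0, hn⟩ : Fin n) +
    ∑ k ∈ Finset.univ.filter (fun k : Fin n => 0 < k.val ∧ k.val < i),
      (mX' (⟨k.val - 1, lt_of_le_of_lt (Nat.sub_le _ _) k.isLt⟩ : Fin n)) ^ (m k.val) * pd' k)

/-- `η_{j+1}` of the chain: `η_1(t) = t`, `η_{j+2}(t) = ∫_0^t (x_{j+1} + η_{j+1}(y))^{m_{j+1}} dy`. -/
noncomputable def etaChain (m : ℕ → ℕ) (x : ℕ → ℝ) : ℕ → ℝ → ℝ
  | 0 => fun t => t
  | (j+1) => fun t => ∫ y in (0:ℝ)..t, (x j + etaChain m x j y) ^ (m (j+1))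

/-- `ξ̃_{n-k}` of the chain (reversed indexing):
`ξ̃_n(t) = t w_n^{m_n}`, `ξ̃_i(t) = ∫_0^t (w_i + ξ̃_{i+1}(y))^{m_i} dy`. -/
noncomputable def xiRev (n : ℕ) (m : ℕ → ℕ) (w : ℕ → ℂ) : ℕ → ℝ → ℂ
  | 0 => fun t => (t : ℂ) * (w (n-1)) ^ (m n)
  | (k+1) => fun t => ∫ y in (0:ℝ)..t, (w (n-k-2) + xiRev n m w k y) ^ (m (n-k-1))

/-- Formal antiderivative `∫_0^t` of a polynomial. -/
noncomputable def polyInt (p : Polynomial ℂ) : Polynomial ℂ :=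
  p.sum fun k a => Polynomial.C (a / (k + 1)) * Polynomial.X ^ (k + 1)

/-- Coefficient-wise antiderivative of a polynomial in the commuting symbols `∂_{x_i}`
with coefficients polynomial in `t`. -/
noncomputable def mvPolyInt {n : ℕ} (q : MvPolynomial (Fin n) (Polynomial ℂ)) :
    MvPolynomial (Fin n) (Polynomial ℂ) :=
  ∑ d ∈ q.support, MvPolynomial.monomial d (polyInt (q.coeff d))

/-- Interpretation of a commutative polynomial in the symbols `∂_{x_i}` as a
constant-coefficient differential operator. -/
noncomputable def opOfDeriv {n : ℕ} (P : MvPolynomial (Fin n) ℂ) : DiffOp' n :=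
  ∑ d ∈ P.support, P.coeff d • ((List.finRange n).map fun a => pd' a ^ d a).prod

/-- `(Σ a_k x^k)` coefficients of the Campbell–Hausdorff formula. -/
noncomputable def aCH : ℕ → ℚ
  | 0 => 1
  | (k+1) => ∑ mm ∈ Finset.Icc 1 (k+2), ((-1 : ℚ)) ^ (mm - 1) / mm *
      ∑ p ∈ Finset.Nat.antidiagonalTuple mm (k + 2 - mm),
        ((∏ i : Fin mm, (if i.val = mm - 1 then (p i).factorial
          else ((p i) + 1).factorial : ℕ) : ℕ) : ℚ)⁻¹

end

noncomputable section
variable {n : ℕ} [NeZero n]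

/-- `η_i(t)` for a tree: `η_1(t) = t`,
`η_i(t) = ∫_0^t (x_{p(i)} + η_{p(i)}(y))^{d[(ι_{p(i)},ι_i)]} dy`. -/
noncomputable def etaTree (T : TreeDiagram n) (x : Fin n → ℝ) : Fin n → ℝ → ℝ
  | i => if h : i = 0 then fun t => t
      else fun t => ∫ y in (0:ℝ)..t, (x (T.parent i) + etaTree T x (T.parent i) y) ^ (T.weight i)
termination_by i => i.val
decreasing_by exact T.parent_lt i h

/-- The children of a node. -/
def childFinset (T : TreeDiagram n) (i : Fin n) : Finset (Fin n) :=
  Finset.univ.filter fun s : Fin n => s ≠ 0 ∧ T.parent s = i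

/-- `ξ̃_i(t)` as a polynomial in the commuting symbols `∂_{x_j}` (the variables of the
`MvPolynomial`) with coefficients polynomial in `t`:
`ξ̃_r(t) = t ∂_{x_r}^{m_r}` for tips, and
`ξ̃_i(t) = ∫_0^t (∂_{x_i} + Σ_{ι_s∈Θ_i} ξ̃_s(y))^{m_i} dy` otherwise. -/
noncomputable def xiTree (T : TreeDiagram n) (m : Fin n → ℕ) :
    Fin n → MvPolynomial (Fin n) (Polynomial ℂ)
  | i =>
    if IsTip T i then MvPolynomial.C Polynomial.X * (MvPolynomial.X i) ^ (m i)
    else mvPolyInt ((MvPolynomial.X i +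
      ∑ s ∈ (childFinset T i).attach, xiTree T m s.1) ^ (m i))
termination_by i => n - i.val
decreasing_by
  have hs := s.2
  simp only [childFinset, Finset.mem_filter, Finset.mem_univ, true_and] at hs
  have h1 : T.parent s.1 < s.1 := T.parent_lt s.1 hs.1
  rw [hs.2] at h1
  have h2 := s.1.isLt
  have h3 : i.val < s.1.val := h1
  omega

/-- The operator `ξ_i`: `ξ_1 = ξ̃_1(t)` and `ξ_i = x_{p(i)}·ξ̃_i(t)` for `i ≥ 2`. -/
noncomputable def xiFull (T : TreeDiagram n) (m : Fin n → ℕ) (t : ℂ) (i : Fin n) : DiffOp n :=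
  if i = 0 then opOfDeriv ((xiTree T m i).map (Polynomial.evalRingHom t))
  else mX (T.parent i) * opOfDeriv ((xiTree T m i).map (Polynomial.evalRingHom t))

/-- `D = ∂_{x_1}^{m_1} + Σ_{(ι_i,ι_j)∈E} x_i ∂_{x_j}^{m_j}`. -/
noncomputable def Dtree (T : TreeDiagram n) (m : Fin n → ℕ) : DiffOp n :=
  pd (0 : Fin n) ^ (m 0) +
    ∑ j ∈ Finset.univ.filter (fun j : Fin n => j ≠ 0), mX (T.parent j) * pd j ^ (m j)

/-- The chain tree `T_{A_n}` with all weights `1`. -/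
def chainTree (n : ℕ) [NeZero n] : TreeDiagram n where
  parent := fun i => ⟨i.val - 1, lt_of_le_of_lt (Nat.sub_le _ _) i.isLt⟩
  parent_lt := by
    intro i hi
    have h0 : i.val ≠ 0 := by
      intro h; exact hi (Fin.ext (by simpa using h))
    simp only [Fin.lt_def]
    omega
  weight := fun _ => 1
  weight_pos := fun _ _ => one_pos

end

noncomputable section

/-!
Write `x^d ∂_c` for the monomial vector fields (`monomialVF d c`). Bracketing `x^d ∂_c` with the
edge generator `x_c^w ∂_s` of a child `s` of `c` gives `-w x^{d + (w-1) e_c} ∂_s` as soon as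
`d_s = 0`, which holds while `d` is supported on nodes of smaller index than `c`. Hence an abelian
ideal containing such an `x^d ∂_b`, with `b` a strict ancestor of `i`, also contains some
`x^{d'} ∂_p` at the parent `p` of `i`, and then `x^{d' + (w-1) e_p} ∂_i` with `w = d[(ι_p, ι_i)]`.
These two elements have bracket `(w-1) x^{2d' + (w-2) e_p} ∂_i`, which is nonzero when `w > 1`.
-/

open MvPolynomial LinearMap

attribute [local instance 100] LieRing.ofAssociativeRing

variable {n : ℕ}

theorem MvPolynomial.pderiv_pderiv_comm {σ R : Type*} [CommSemiring R] (a b : σ)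
    (p : MvPolynomial σ R) : pderiv a (pderiv b p) = pderiv b (pderiv a p) := by
  induction p using MvPolynomial.induction_on with
  | C r => simp
  | add p q hp hq => simp [hp, hq]
  | mul_X p c hp =>
    classical
    have hX : ∀ x y : σ, pderiv x (pderiv y (X c : MvPolynomial σ R)) = 0 := fun x y => by
      rw [pderiv_X, Pi.single_apply]; split_ifs <;> simp
    simp only [Derivation.leibniz, smul_eq_mul, map_add, hX, hp]
    ring

def monomialVF (d : Fin n →₀ ℕ) (c : Fin n) : DiffOp n :=
  mulLeft ℂ (monomial d 1) * pd c

theorem monomialVF_apply (d : Fin n →₀ ℕ) (c : Fin n) (p : MvPolynomial (Fin n) ℂ) :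
    monomialVF d c p = monomial d 1 * pderiv c p := rfl

theorem lie_monomialVF (a c : Fin n →₀ ℕ) (b e : Fin n) :
    ⁅monomialVF a b, monomialVF c e⁆ =
      (c b : ℂ) • monomialVF (a + (c - Finsupp.single b 1)) e -
        (a e : ℂ) • monomialVF (c + (a - Finsupp.single e 1)) b := by
  refine LinearMap.ext fun p => ?_
  simp only [Ring.lie_def, LinearMap.sub_apply, Module.End.mul_apply, LinearMap.smul_apply,
    monomialVF_apply, pderiv_mul, pderiv_monomial, pderiv_pderiv_comm b e, mul_add,
    ← mul_assoc, monomial_mul, ← smul_mul_assoc, smul_monomial, smul_eq_mul, one_mul, mul_one]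
  rw [add_comm c a]
  ring

theorem monomialVF_ne_zero (d : Fin n →₀ ℕ) (c : Fin n) : monomialVF d c ≠ 0 := by
  intro h
  have := congrArg (fun A : DiffOp n => A (X c)) h
  simp [monomialVF_apply] at this

theorem pd_eq_monomialVF (c : Fin n) : pd c = monomialVF 0 c := by
  refine LinearMap.ext fun p => ?_
  simp [monomialVF_apply, pd]

theorem mXpow_mul_pd (j : Fin n → ℕ) (c : Fin n) :
    mXpow j * pd c = monomialVF (Finsupp.equivFunOnFinite.symm j) c := by
  refine LinearMap.ext fun p => ?_
  simp only [Module.End.mul_apply, mXpow, mulLeft_apply, monomialVF_apply, pd]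
  rw [monomial_eq, C_1, one_mul, Finsupp.prod_fintype _ _ (by simp)]
  rfl

theorem mX_pow_mul_pd (a : Fin n) (w : ℕ) (c : Fin n) :
    mX a ^ w * pd c = monomialVF (Finsupp.single a w) c := by
  rw [monomialVF, ← X_pow_eq_monomial, ← pow_mulLeft]
  rfl

namespace TreeDiagram

variable [NeZero n] (T : TreeDiagram n)

@[elab_as_elim]
theorem induction_parent {motive : Fin n → Prop} (zero : motive 0)
    (parent : ∀ i, i ≠ 0 → motive (T.parent i) → motive i) (i : Fin n) : motive i := by
  induction i using WellFoundedLT.induction with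
  | _ i ih =>
    by_cases hi : i = 0
    · exact hi ▸ zero
    · exact parent i hi (ih _ (T.parent_lt i hi))

end TreeDiagram

section clanSet

variable [NeZero n] (T : TreeDiagram n)

theorem clanSet_zero : clanSet T 0 = {0} := by
  rw [clanSet]; simp

theorem clanSet_of_ne_zero {i : Fin n} (hi : i ≠ 0) :
    clanSet T i = insert i (clanSet T (T.parent i)) := by
  rw [clanSet]; simp [hi]

theorem le_of_mem_clanSet {a i : Fin n} (ha : a ∈ clanSet T i) : a ≤ i := by
  induction i using T.induction_parent with
  | zero => simpa [clanSet_zero] using ha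
  | parent i hi ih =>
    rw [clanSet_of_ne_zero T hi, Finset.mem_insert] at ha
    rcases ha with rfl | ha
    · exact le_rfl
    · exact (ih ha).trans (T.parent_lt i hi).le

theorem zero_mem_clanSet (i : Fin n) : 0 ∈ clanSet T i := by
  induction i using T.induction_parent with
  | zero => simp [clanSet_zero]
  | parent i hi ih => simp [clanSet_of_ne_zero T hi, ih]

theorem mem_clanSet_parent {a i : Fin n} (ha : a ∈ clanSet T i) (hai : a ≠ i) :
    i ≠ 0 ∧ a ∈ clanSet T (T.parent i) := by
  have hi : i ≠ 0 := by
    rintro rfl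
    exact hai (by simpa [clanSet_zero] using ha)
  rw [clanSet_of_ne_zero T hi, Finset.mem_insert] at ha
  exact ⟨hi, ha.resolve_left hai⟩

end clanSet

theorem monomialVF_mem_upL1 [NeZero n] (T : TreeDiagram n) {s : Fin n} (hs : s ≠ 0) :
    monomialVF (Finsupp.single (T.parent s) (T.weight s)) s ∈ upL1 T := by
  rw [← mX_pow_mul_pd]
  exact Submodule.mem_sup_right (LieSubalgebra.subset_lieSpan (Or.inr ⟨s, hs, rfl⟩))

namespace IsAbelianIdeal

variable [NeZero n] {T : TreeDiagram n} {I : Submodule ℂ (DiffOp n)}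

theorem monomialVF_mem_of_parent (hI : IsAbelianIdeal (upL1 T) I) {s : Fin n} (hs : s ≠ 0) {d : Fin n →₀ ℕ} (hds : d s = 0)
    (h : monomialVF d (T.parent s) ∈ I) :
    monomialVF (d + Finsupp.single (T.parent s) (T.weight s - 1)) s ∈ I := by
  have hw : (T.weight s : ℂ) ≠ 0 := by exact_mod_cast (T.weight_pos s hs).ne'
  have hlie := hI.2.1 _ (monomialVF_mem_upL1 T hs) _ h
  rw [lie_monomialVF, hds, Nat.cast_zero, zero_smul, zero_sub, Finsupp.single_eq_same] at hlie
  simpa [hw] using I.smul_mem (-(T.weight s : ℂ))⁻¹ hlie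

theorem exists_monomialVF_mem_of_mem_clanSet (hI : IsAbelianIdeal (upL1 T) I) {c s : Fin n}
    (hcs : c ∈ clanSet T s) {d : Fin n →₀ ℕ} (hd : ∀ a, c ≤ a → d a = 0)
    (h : monomialVF d c ∈ I) : ∃ d' : Fin n →₀ ℕ, (∀ a, s ≤ a → d' a = 0) ∧ monomialVF d' s ∈ I := by
  induction s using T.induction_parent with
  | zero =>
    obtain rfl : c = 0 := by simpa [clanSet_zero] using hcs
    exact ⟨d, hd, h⟩
  | parent s hs ih =>
    obtain rfl | hcs' := eq_or_ne c s
    · exact ⟨d, hd, h⟩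
    obtain ⟨d', hd', h'⟩ := ih (mem_clanSet_parent T hcs hcs').2
    have hps := T.parent_lt s hs
    refine ⟨_, fun a hsa => ?_, hI.monomialVF_mem_of_parent hs (hd' s hps.le) h'⟩
    simp [hd' a (hps.le.trans hsa), (hps.trans_le hsa).ne]

theorem monomialVF_parent_not_mem (hI : IsAbelianIdeal (upL1 T) I) {i : Fin n} (hi : i ≠ 0)
    (hw : 1 < T.weight i) {d : Fin n →₀ ℕ} (hd : ∀ a, T.parent i ≤ a → d a = 0) :
    monomialVF d (T.parent i) ∉ I := by
  intro h
  have hpi := T.parent_lt i hi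
  have h' := hI.monomialVF_mem_of_parent hi (hd i hpi.le) h
  have hlie := hI.2.2 _ h _ h'
  rw [lie_monomialVF, hd i hpi.le, Nat.cast_zero, zero_smul, sub_zero, smul_eq_zero] at hlie
  have hw' : ((T.weight i - 1 : ℕ) : ℂ) ≠ 0 := by exact_mod_cast (Nat.sub_pos_of_lt hw).ne'
  simp [hd _ le_rfl, hw', monomialVF_ne_zero] at hlie

theorem monomialVF_not_mem (hI : IsAbelianIdeal (upL1 T) I) {i : Fin n} (hi : i ≠ 0)
    (hw : 1 < T.weight i) {b : Fin n} (hb : b ∈ (clanSet T i).erase i) {d : Fin n →₀ ℕ}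
    (hd : ∀ a, b ≤ a → d a = 0) : monomialVF d b ∉ I := by
  intro h
  obtain ⟨hbi, hb⟩ := Finset.mem_erase.1 hb
  obtain ⟨d', hd', h'⟩ :=
    hI.exists_monomialVF_mem_of_mem_clanSet (mem_clanSet_parent T hb hbi).2 hd h
  exact hI.monomialVF_parent_not_mem hi hw hd' h'

end IsAbelianIdeal

/-- Lemma 2.5. -/
theorem upL1_abelian_ideal_exclusion (n : ℕ) [NeZero n] (T : TreeDiagram n)
    (I : Submodule ℂ (DiffOp n)) (hI : IsAbelianIdeal (upL1 T) I)
    (i : Fin n) (hi : i ≠ 0) (hw : 1 < T.weight i) :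
    pd (0 : Fin n) ∉ I ∧
    ∀ b ∈ (clanSet T i).erase i, b ≠ 0 →
      ∀ j : Fin n → ℕ, (∀ a : Fin n, a ∉ (clanSet T b).erase b → j a = 0) →
        mXpow j * pd b ∉ I := by
  refine ⟨?_, fun b hb _ j hj => ?_⟩
  · rw [pd_eq_monomialVF]
    exact hI.monomialVF_not_mem hi hw
      (Finset.mem_erase.2 ⟨Ne.symm hi, zero_mem_clanSet T i⟩) fun _ _ => rfl
  · rw [mXpow_mul_pd]
    refine hI.monomialVF_not_mem hi hw hb fun a hba => hj a fun ha => ?_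
    obtain ⟨hab, ha⟩ := Finset.mem_erase.1 ha
    exact hab (le_antisymm (le_of_mem_clanSet T ha) hba)

end
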